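/- Disappearance of the p-Laplacian fundamental solution at the critical exponent: let N ≥ 2, p_c = 2N/(N+1), and fix M > 0 and t > 0. For each p ∈ (p_c, 2) let B_p denote the p-Laplacian Barenblatt solution whose constant C = C(p) > 0 is chosen so that ∫_{ℝ^N} B_p(x,t) dx = M. Then, as p → p_c from above: (a) for every x ≠ 0, B_p(x,t) → 0; and (b) for every bounded continuous function f : ℝ^N → ℝ, ∫_{ℝ^N} f(x) B_p(x,t) dx → M·f(0); that is, the measures B_p(·,t) dx converge weakly-* to the Dirac mass M·δ₀. -/

import Mathlib

/-!
Since `C ≥ 0`, `B_p(x,t)` is bounded by the `C = 0` profile, which is explicit and homogeneous: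
`B_p(x,t) ≤ A(p,t) λ^{1/(2-p)} |x|^{-p/(2-p)}`. As `p ↓ p_c` we have `λ → 0`, so this envelope
vanishes pointwise, giving (a). Its mass outside the ball of radius `δ` is finite exactly because
`p/(2-p) - N = λ/(2-p) > 0`, and equals a continuous factor times `λ^{1/(2-p) - 1}`, which still
tends to `0` because `1/(2-p_c) = (N+1)/2 > 1`. So the `B_p(·,t)` are nonnegative functions of
mass `M` whose mass outside every ball tends to `0`: an approximate identity, which
gives (b).
-/

open MeasureTheory Real Filter Topology Set

noncomputable section

/-- `λ = N(p-2)+p`. -/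
def pleLambda (N : ℕ) (p : ℝ) : ℝ := N * (p - 2) + p

/-- `β = 1/λ`. -/
def pleBeta (N : ℕ) (p : ℝ) : ℝ := 1 / pleLambda N p

/-- `α = Nβ`. -/
def pleAlpha (N : ℕ) (p : ℝ) : ℝ := N * pleBeta N p

/-- `k = ((2-p)/p) λ^{-1/(p-1)}`. -/
def pleK (N : ℕ) (p : ℝ) : ℝ := (2 - p) / p * pleLambda N p ^ (-(1 / (p - 1)))

/-- The Barenblatt solution
`B(x,t) = t^{-α} (C + k (|x| t^{-β})^{p/(p-1)})^{-(p-1)/(2-p)}`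
of the `p`-Laplacian evolution equation, for `p_c < p < 2`. -/
def pleBarenblatt (N : ℕ) (p C : ℝ) (x : EuclideanSpace ℝ (Fin N)) (t : ℝ) : ℝ :=
  t ^ (-pleAlpha N p) *
    (C + pleK N p * (‖x‖ * t ^ (-pleBeta N p)) ^ (p / (p - 1))) ^ (-((p - 1) / (2 - p)))

open Metric Module

lemma indicator_compl_ball_comp_norm {E F : Type*} [SeminormedAddGroup E] [Zero F] (δ : ℝ)
    (g : ℝ → F) :
    (ball (0 : E) δ)ᶜ.indicator (fun x => g ‖x‖) = fun x => (Ici δ).indicator g ‖x‖ := by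
  ext x
  rw [← indicator_comp_right (g := g) norm]
  congr 2
  ext y
  simp

lemma eqOn_pow_smul_indicator_rpow {n : ℕ} (hn : n ≠ 0) (a δ : ℝ) :
    EqOn (fun y : ℝ => y ^ (n - 1) • (Ici δ).indicator (fun r => r ^ (-a)) y)
      ((Ici δ).indicator fun y => y ^ ((n : ℝ) - 1 - a)) (Ioi 0) := by
  intro y (hy : 0 < y)
  by_cases hyδ : y ∈ Ici δ
  · simp only [indicator_of_mem hyδ, smul_eq_mul]
    rw [← rpow_natCast, ← rpow_add hy, Nat.cast_sub (Nat.one_le_iff_ne_zero.mpr hn)]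
    ring_nf
  · simp [hyδ]

section Radial

variable {E : Type*} [NormedAddCommGroup E] [NormedSpace ℝ E] [MeasurableSpace E] [BorelSpace E]
  [FiniteDimensional ℝ E] [Nontrivial E] (μ : Measure E) [μ.IsAddHaarMeasure]

lemma integrableOn_compl_ball_norm_rpow_neg {a δ : ℝ} (ha : (finrank ℝ E : ℝ) < a)
    (hδ : 0 < δ) : IntegrableOn (fun x : E => ‖x‖ ^ (-a)) (ball 0 δ)ᶜ μ := by
  rw [← integrable_indicator_iff measurableSet_ball.compl,
    indicator_compl_ball_comp_norm δ (fun r : ℝ => r ^ (-a)), integrable_fun_norm_addHaar μ,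
    integrableOn_congr_fun (eqOn_pow_smul_indicator_rpow finrank_pos.ne' a δ) measurableSet_Ioi,
    integrableOn_indicator_iff measurableSet_Ici]
  refine IntegrableOn.mono_set ?_ inter_subset_left
  rw [integrableOn_Ici_iff_integrableOn_Ioi]
  exact integrableOn_Ioi_rpow_of_lt (by linarith) hδ

lemma integral_compl_ball_norm_rpow_neg {a δ : ℝ} (ha : (finrank ℝ E : ℝ) < a) (hδ : 0 < δ) :
    ∫ x in (ball 0 δ)ᶜ, ‖x‖ ^ (-a) ∂μ =
      finrank ℝ E * μ.real (ball 0 1) * (δ ^ (finrank ℝ E - a) / (a - finrank ℝ E)) := by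
  rw [← integral_indicator measurableSet_ball.compl,
    indicator_compl_ball_comp_norm δ (fun r : ℝ => r ^ (-a)), integral_fun_norm_addHaar μ,
    setIntegral_congr_fun measurableSet_Ioi (eqOn_pow_smul_indicator_rpow finrank_pos.ne' a δ),
    setIntegral_indicator measurableSet_Ici, inter_eq_right.mpr (Ici_subset_Ioi.mpr hδ),
    integral_Ici_eq_integral_Ioi, integral_Ioi_rpow_of_lt (by linarith) hδ, nsmul_eq_mul,
    smul_eq_mul, show (finrank ℝ E : ℝ) - 1 - a + 1 = -(a - finrank ℝ E) by ring,
    neg_div_neg_eq, neg_sub, mul_assoc]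

end Radial

section ApproximateIdentity

variable {E : Type*} [NormedAddCommGroup E] [MeasurableSpace E] [OpensMeasurableSpace E]
  {μ : Measure E} {f : E → ℝ} {K : ℝ}

lemma abs_integral_mul_sub_le {B : E → ℝ} (hB : 0 ≤ B) (hBi : Integrable B μ)
    (hfm : AEStronglyMeasurable f μ) (hfK : ∀ x, |f x| ≤ K) {η δ : ℝ} (hη : 0 ≤ η)
    (hfη : ∀ x, ‖x‖ < δ → |f x - f 0| ≤ η) :
    |∫ x, f x * B x ∂μ - (∫ x, B x ∂μ) * f 0| ≤
      η * ∫ x, B x ∂μ + 2 * K * ∫ x in (ball 0 δ)ᶜ, B x ∂μ := by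
  have hK : 0 ≤ K := (abs_nonneg _).trans (hfK 0)
  have hosc : ∀ x, |f x - f 0| ≤ 2 * K := fun x =>
    (abs_sub _ _).trans (by linarith [hfK x, hfK 0])
  have hfB : Integrable (fun x => (f x - f 0) * B x) μ :=
    hBi.bdd_mul (hfm.sub aestronglyMeasurable_const) (.of_forall fun x => hosc x)
  have hpointwise : ∀ x, |(f x - f 0) * B x| ≤
      η * B x + 2 * K * (ball 0 δ)ᶜ.indicator B x := by
    intro x
    rw [abs_mul, abs_of_nonneg (hB x)]
    by_cases hx : ‖x‖ < δ
    · have : x ∉ (ball (0 : E) δ)ᶜ := by simpa using hx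
      rw [indicator_of_notMem this, mul_zero, add_zero]
      exact mul_le_mul_of_nonneg_right (hfη x hx) (hB x)
    · have : x ∈ (ball (0 : E) δ)ᶜ := by simpa using hx
      rw [indicator_of_mem this]
      linarith [mul_le_mul_of_nonneg_right (hosc x) (hB x), mul_nonneg hη (hB x)]
  calc |∫ x, f x * B x ∂μ - (∫ x, B x ∂μ) * f 0|
      = |∫ x, (f x - f 0) * B x ∂μ| := by
        have hfB' : Integrable (fun x => f x * B x) μ := hBi.bdd_mul hfm (.of_forall hfK)
        rw [← integral_mul_const, ← integral_sub hfB' (hBi.mul_const _)]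
        simp only [sub_mul, mul_comm (B _)]
    _ ≤ ∫ x, (η * B x + 2 * K * (ball 0 δ)ᶜ.indicator B x) ∂μ :=
        (abs_integral_le_integral_abs).trans <| integral_mono hfB.abs
          ((hBi.const_mul η).add ((hBi.indicator measurableSet_ball.compl).const_mul _)) hpointwise
    _ = η * ∫ x, B x ∂μ + 2 * K * ∫ x in (ball 0 δ)ᶜ, B x ∂μ := by
        rw [integral_add (hBi.const_mul η) ((hBi.indicator measurableSet_ball.compl).const_mul _),
          integral_const_mul, integral_const_mul, integral_indicator measurableSet_ball.compl]

theorem tendsto_integral_mul_of_tendsto_setIntegral_compl_ball {ι : Type*} {l : Filter ι}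
    {B : ι → E → ℝ} {M : ℝ} (hB : ∀ᶠ i in l, 0 ≤ B i) (hBi : ∀ᶠ i in l, Integrable (B i) μ)
    (hmass : ∀ᶠ i in l, ∫ x, B i x ∂μ = M)
    (htail : ∀ δ > 0, Tendsto (fun i => ∫ x in (ball 0 δ)ᶜ, B i x ∂μ) l (𝓝 0))
    (hf : ContinuousAt f 0) (hfm : AEStronglyMeasurable f μ) (hfK : ∀ x, |f x| ≤ K) :
    Tendsto (fun i => ∫ x, f x * B i x ∂μ) l (𝓝 (M * f 0)) := by
  rw [Metric.tendsto_nhds]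
  intro ε hε
  set η := ε / (2 * (|M| + 1)) with hη_def
  have hη : 0 < η := by positivity
  have hηM : η * M < ε / 2 := by
    calc η * M ≤ η * |M| := mul_le_mul_of_nonneg_left (le_abs_self M) hη.le
      _ < η * (|M| + 1) := by linarith
      _ = ε / 2 := by rw [hη_def]; field_simp
  obtain ⟨δ, hδ, hfδ⟩ := Metric.continuousAt_iff.mp hf η hη
  have hfη : ∀ x, ‖x‖ < δ → |f x - f 0| ≤ η := fun x hx =>
    (hfδ (by rwa [dist_zero_right])).le
  have hsmall : ∀ᶠ i in l, 2 * K * ∫ x in (ball 0 δ)ᶜ, B i x ∂μ < ε / 2 := by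
    refine Tendsto.eventually_lt_const (by positivity) ?_
    simpa using (htail δ hδ).const_mul (2 * K)
  filter_upwards [hB, hBi, hmass, hsmall] with i hB_i hBi_i hmass_i hsmall_i
  have hbound := abs_integral_mul_sub_le hB_i hBi_i hfm hfK hη.le hfη
  rw [hmass_i] at hbound
  rw [Real.dist_eq]
  linarith

end ApproximateIdentity

lemma tendsto_mul_rpow_of_eq_zero {α : Type*} [TopologicalSpace α] {g L e : α → ℝ} {a : α}
    (hg : ContinuousAt g a) (hL : ContinuousAt L a) (hLa : L a = 0) (he : ContinuousAt e a)
    (hea : 0 < e a) : Tendsto (fun x => g x * L x ^ e x) (𝓝 a) (𝓝 0) := by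
  simpa [hLa, zero_rpow hea.ne'] using (hg.fun_mul (hL.rpow he (.inr hea))).tendsto

def pleCritical (N : ℕ) : ℝ := 2 * N / (N + 1)

lemma pleCritical_lt_two (N : ℕ) : pleCritical N < 2 := by
  rw [pleCritical, div_lt_iff₀ (by positivity)]
  linarith

lemma one_lt_pleCritical {N : ℕ} (hN : 2 ≤ N) : 1 < pleCritical N := by
  have : (2 : ℝ) ≤ N := by exact_mod_cast hN
  rw [pleCritical, lt_div_iff₀ (by positivity)]
  linarith

lemma one_le_pleCritical {N : ℕ} (hN : N ≠ 0) : 1 ≤ pleCritical N := by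
  have : (1 : ℝ) ≤ N := by exact_mod_cast Nat.one_le_iff_ne_zero.mpr hN
  rw [pleCritical, le_div_iff₀ (by positivity)]
  linarith

lemma pleLambda_pos_iff {N : ℕ} {p : ℝ} : 0 < pleLambda N p ↔ pleCritical N < p := by
  rw [pleCritical, div_lt_iff₀ (by positivity), pleLambda]
  constructor <;> intro h <;> linarith

lemma pleLambda_pleCritical (N : ℕ) : pleLambda N (pleCritical N) = 0 := by
  rw [pleLambda, pleCritical]
  field_simp
  ring

lemma continuous_pleLambda (N : ℕ) : Continuous (pleLambda N) := by
  unfold pleLambda; fun_prop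

lemma pleK_pos {N : ℕ} {p : ℝ} (hlam : 0 < pleLambda N p) (hp0 : 0 < p) (hp2 : p < 2) :
    0 < pleK N p :=
  mul_pos (div_pos (by linarith) hp0) (rpow_pos_of_pos hlam _)

lemma pleBarenblatt_nonneg {N : ℕ} {p C t : ℝ} (hk : 0 ≤ pleK N p) (hC : 0 ≤ C) (ht : 0 ≤ t)
    (x : EuclideanSpace ℝ (Fin N)) : 0 ≤ pleBarenblatt N p C x t := by
  unfold pleBarenblatt
  have : 0 ≤ (‖x‖ * t ^ (-pleBeta N p)) ^ (p / (p - 1)) := by positivity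
  positivity

lemma pleBarenblatt_le_pleBarenblatt_zero {N : ℕ} {p C t : ℝ} (hp1 : 1 < p) (hp2 : p < 2)
    (hlam : 0 < pleLambda N p) (hC : 0 ≤ C) (ht : 0 < t) {x : EuclideanSpace ℝ (Fin N)}
    (hx : x ≠ 0) : pleBarenblatt N p C x t ≤ pleBarenblatt N p 0 x t := by
  have hk := pleK_pos hlam (by linarith) hp2
  have : 0 < ‖x‖ * t ^ (-pleBeta N p) := mul_pos (norm_pos_iff.mpr hx) (rpow_pos_of_pos ht _)
  have : 0 ≤ (p - 1) / (2 - p) := div_nonneg (by linarith) (by linarith)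
  refine mul_le_mul_of_nonneg_left ?_ (rpow_pos_of_pos ht _).le
  exact rpow_le_rpow_of_nonpos (by positivity) (by linarith) (by linarith)

def pleEnvelopeConst (p t : ℝ) : ℝ := t ^ (2 - p)⁻¹ * ((2 - p) / p) ^ (-((p - 1) / (2 - p)))

lemma continuousAt_pleEnvelopeConst {p t : ℝ} (ht : 0 < t) (hp0 : 0 < p) (hp2 : p < 2) :
    ContinuousAt (fun q => pleEnvelopeConst q t) p := by
  have hp2' : 2 - p ≠ 0 := by linarith
  unfold pleEnvelopeConst
  refine ContinuousAt.mul ?_ ?_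
  · exact continuousAt_const.rpow (by fun_prop (disch := exact hp2')) (.inl ht.ne')
  · exact ContinuousAt.rpow (by fun_prop (disch := exact hp0.ne'))
      (by fun_prop (disch := exact hp2')) (.inl (div_pos (by linarith) hp0).ne')

lemma pleBarenblatt_zero_eq {N : ℕ} {p t : ℝ} (hp1 : 1 < p) (hp2 : p < 2)
    (hlam : 0 < pleLambda N p) (ht : 0 < t) {x : EuclideanSpace ℝ (Fin N)} (hx : x ≠ 0) :
    pleBarenblatt N p 0 x t =
      pleEnvelopeConst p t * ‖x‖ ^ (-(p / (2 - p))) * pleLambda N p ^ (2 - p)⁻¹ := by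
  have hr : 0 < ‖x‖ := norm_pos_iff.mpr hx
  have hc : 0 < (2 - p) / p := div_pos (by linarith) (by linarith)
  have hk : 0 < pleK N p := pleK_pos hlam (by linarith) hp2
  have hs : 0 < ‖x‖ * t ^ (-pleBeta N p) := mul_pos hr (rpow_pos_of_pos ht _)
  have hks : 0 < pleK N p * (‖x‖ * t ^ (-pleBeta N p)) ^ (p / (p - 1)) :=
    mul_pos hk (rpow_pos_of_pos hs _)
  have hp1' : p - 1 ≠ 0 := by linarith
  have hp2' : 2 - p ≠ 0 := by linarith
  have hlam' : (N : ℝ) * (p - 2) + p ≠ 0 := hlam.ne'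
  refine log_injOn_pos (mem_Ioi.2 ?_) (mem_Ioi.2 ?_) ?_
  · unfold pleBarenblatt; positivity
  · unfold pleEnvelopeConst; positivity
  rw [pleBarenblatt, zero_add, log_mul (by positivity) (by positivity), log_rpow ht,
    log_rpow hks, log_mul hk.ne' (by positivity), log_rpow hs, log_mul hr.ne' (by positivity),
    log_rpow ht, pleK, log_mul hc.ne' (by positivity), log_rpow hlam, pleEnvelopeConst,
    log_mul (by positivity) (by positivity), log_mul (by positivity) (by positivity),
    log_mul (by positivity) (by positivity), log_rpow ht, log_rpow hc, log_rpow hr, log_rpow hlam]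
  unfold pleAlpha pleBeta pleLambda
  field_simp
  ring

lemma eventually_nhdsGT_pleCritical {N : ℕ} (hN : N ≠ 0) :
    ∀ᶠ p in 𝓝[>] pleCritical N, 1 < p ∧ p < 2 ∧ 0 < pleLambda N p := by
  filter_upwards [self_mem_nhdsWithin, nhdsWithin_le_nhds (Iio_mem_nhds (pleCritical_lt_two N))]
    with p (hp : pleCritical N < p) (hp2 : p < 2)
  exact ⟨(one_le_pleCritical hN).trans_lt hp, hp2, pleLambda_pos_iff.mpr hp⟩

lemma tendsto_mul_pleLambda_rpow_nhdsGT_pleCritical {N : ℕ} {g e : ℝ → ℝ}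
    (hg : ContinuousAt g (pleCritical N)) (he : ContinuousAt e (pleCritical N))
    (hepos : 0 < e (pleCritical N)) :
    Tendsto (fun p => g p * pleLambda N p ^ e p) (𝓝[>] pleCritical N) (𝓝 0) :=
  (tendsto_mul_rpow_of_eq_zero hg (continuous_pleLambda N).continuousAt
    (pleLambda_pleCritical N) he hepos).mono_left nhdsWithin_le_nhds

lemma tendsto_pleBarenblatt_zero_nhdsGT_pleCritical {N : ℕ} (hN : N ≠ 0) {t : ℝ} (ht : 0 < t)
    {x : EuclideanSpace ℝ (Fin N)} (hx : x ≠ 0) :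
    Tendsto (fun p => pleBarenblatt N p 0 x t) (𝓝[>] pleCritical N) (𝓝 0) := by
  have hpc2 : 2 - pleCritical N ≠ 0 := (sub_pos.mpr (pleCritical_lt_two N)).ne'
  refine Tendsto.congr' ?_ (tendsto_mul_pleLambda_rpow_nhdsGT_pleCritical
    (g := fun p => pleEnvelopeConst p t * ‖x‖ ^ (-(p / (2 - p)))) (e := fun p => (2 - p)⁻¹)
    ((continuousAt_pleEnvelopeConst ht ?_ (pleCritical_lt_two N)).fun_mul ?_)
    (by fun_prop (disch := exact hpc2)) ?_)
  · filter_upwards [eventually_nhdsGT_pleCritical hN] with p ⟨hp1, hp2, hlam⟩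
    exact (pleBarenblatt_zero_eq hp1 hp2 hlam ht hx).symm
  · exact zero_lt_one.trans_le (one_le_pleCritical hN)
  · exact continuousAt_const.rpow (by fun_prop (disch := exact hpc2))
      (.inl (norm_ne_zero_iff.mpr hx))
  · exact inv_pos.mpr (sub_pos.mpr (pleCritical_lt_two N))

lemma pleLambda_div_two_sub {N : ℕ} {p : ℝ} (hp2 : p < 2) :
    pleLambda N p / (2 - p) = p / (2 - p) - N := by
  have : 2 - p ≠ 0 := by linarith
  rw [pleLambda]; field_simp; ring

lemma eqOn_compl_ball_pleBarenblatt_zero {N : ℕ} {p t δ : ℝ} (hp1 : 1 < p) (hp2 : p < 2)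
    (hlam : 0 < pleLambda N p) (ht : 0 < t) (hδ : 0 < δ) :
    EqOn (fun x => pleBarenblatt N p 0 x t)
      (fun x => pleEnvelopeConst p t * pleLambda N p ^ (2 - p)⁻¹ * ‖x‖ ^ (-(p / (2 - p))))
      (ball (0 : EuclideanSpace ℝ (Fin N)) δ)ᶜ := by
  intro x hx
  have hx0 : x ≠ 0 := by rintro rfl; exact hx (mem_ball_self hδ)
  simp only [pleBarenblatt_zero_eq hp1 hp2 hlam ht hx0, mul_right_comm]

lemma integrableOn_compl_ball_pleBarenblatt_zero {N : ℕ} (hN : N ≠ 0) {p t δ : ℝ} (hp1 : 1 < p)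
    (hp2 : p < 2) (hlam : 0 < pleLambda N p) (ht : 0 < t) (hδ : 0 < δ) :
    IntegrableOn (fun x => pleBarenblatt N p 0 x t) (ball (0 : EuclideanSpace ℝ (Fin N)) δ)ᶜ := by
  have : NeZero N := ⟨hN⟩
  rw [integrableOn_congr_fun (eqOn_compl_ball_pleBarenblatt_zero hp1 hp2 hlam ht hδ)
    measurableSet_ball.compl]
  refine (integrableOn_compl_ball_norm_rpow_neg volume ?_ hδ).const_mul _
  rw [finrank_euclideanSpace_fin, ← sub_pos, ← pleLambda_div_two_sub hp2]
  exact div_pos hlam (by linarith)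

lemma setIntegral_compl_ball_pleBarenblatt_zero {N : ℕ} (hN : N ≠ 0) {p t δ : ℝ} (hp1 : 1 < p)
    (hp2 : p < 2) (hlam : 0 < pleLambda N p) (ht : 0 < t) (hδ : 0 < δ) :
    ∫ x in (ball (0 : EuclideanSpace ℝ (Fin N)) δ)ᶜ, pleBarenblatt N p 0 x t =
      pleEnvelopeConst p t * (N * volume.real (ball (0 : EuclideanSpace ℝ (Fin N)) 1) *
        δ ^ ((N : ℝ) - p / (2 - p)) * (2 - p)) * pleLambda N p ^ ((2 - p)⁻¹ - 1) := by
  have : NeZero N := ⟨hN⟩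
  have hp2' : 2 - p ≠ 0 := by linarith
  rw [setIntegral_congr_fun measurableSet_ball.compl
    (eqOn_compl_ball_pleBarenblatt_zero hp1 hp2 hlam ht hδ), integral_const_mul,
    integral_compl_ball_norm_rpow_neg volume ?_ hδ, finrank_euclideanSpace_fin,
    ← pleLambda_div_two_sub hp2, rpow_sub_one hlam.ne']
  · field_simp
  · rw [finrank_euclideanSpace_fin, ← sub_pos, ← pleLambda_div_two_sub hp2]
    exact div_pos hlam (by linarith)

lemma setIntegral_compl_ball_pleBarenblatt_le {N : ℕ} (hN : N ≠ 0) {p C t δ : ℝ} (hp1 : 1 < p)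
    (hp2 : p < 2) (hlam : 0 < pleLambda N p) (hC : 0 ≤ C) (ht : 0 < t) (hδ : 0 < δ) :
    ∫ x in (ball (0 : EuclideanSpace ℝ (Fin N)) δ)ᶜ, pleBarenblatt N p C x t ≤
      ∫ x in (ball (0 : EuclideanSpace ℝ (Fin N)) δ)ᶜ, pleBarenblatt N p 0 x t := by
  refine integral_mono_of_nonneg
    (.of_forall (pleBarenblatt_nonneg (pleK_pos hlam (by linarith) hp2).le hC ht.le))
    (integrableOn_compl_ball_pleBarenblatt_zero hN hp1 hp2 hlam ht hδ)
    (ae_restrict_of_forall_mem measurableSet_ball.compl fun x hx => ?_)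
  have hx0 : x ≠ 0 := by rintro rfl; exact hx (mem_ball_self hδ)
  exact pleBarenblatt_le_pleBarenblatt_zero hp1 hp2 hlam hC ht hx0

lemma tendsto_setIntegral_compl_ball_pleBarenblatt_zero {N : ℕ} (hN : 2 ≤ N) {t δ : ℝ}
    (ht : 0 < t) (hδ : 0 < δ) :
    Tendsto (fun p => ∫ x in (ball (0 : EuclideanSpace ℝ (Fin N)) δ)ᶜ, pleBarenblatt N p 0 x t)
      (𝓝[>] pleCritical N) (𝓝 0) := by
  have hpc1 := one_lt_pleCritical hN
  have hpc2 := pleCritical_lt_two N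
  have hpc2' : 2 - pleCritical N ≠ 0 := by linarith
  refine Tendsto.congr' ?_ (tendsto_mul_pleLambda_rpow_nhdsGT_pleCritical
    (g := fun p => pleEnvelopeConst p t * (N * volume.real (ball (0 : EuclideanSpace ℝ (Fin N)) 1) *
      δ ^ ((N : ℝ) - p / (2 - p)) * (2 - p))) (e := fun p => (2 - p)⁻¹ - 1)
    ((continuousAt_pleEnvelopeConst ht (by linarith) hpc2).fun_mul ?_)
    (by fun_prop (disch := exact hpc2')) ?_)
  · filter_upwards [eventually_nhdsGT_pleCritical (by omega : N ≠ 0)] with p ⟨hp1, hp2, hlam⟩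
    exact (setIntegral_compl_ball_pleBarenblatt_zero (by omega) hp1 hp2 hlam ht hδ).symm
  · refine (continuousAt_const.fun_mul ?_).fun_mul (by fun_prop)
    exact continuousAt_const.rpow (by fun_prop (disch := exact hpc2')) (.inl hδ.ne')
  · rw [sub_pos, one_lt_inv₀ (by linarith)]
    linarith

/-- Disappearance of the `p`-Laplacian fundamental solution at the critical
exponent `p_c = 2N/(N+1)`, `N ≥ 2`: if the Barenblatt solutions `B_p(·,t)` all
have mass `M`, then as `p → p_c⁺` they converge to `0` pointwise away from the
origin and, in the weak-* sense against bounded continuous functions, to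
the Dirac mass `M δ₀`. -/
theorem ple_barenblatt_to_dirac (N : ℕ) (hN : 2 ≤ N)
    (pc : ℝ) (hpc : pc = 2 * N / (N + 1))
    (M t : ℝ) (hM : 0 < M) (ht : 0 < t)
    (C : ℝ → ℝ) (hCpos : ∀ p, pc < p → p < 2 → 0 < C p)
    (hmass : ∀ p, pc < p → p < 2 →
      ∫ x, pleBarenblatt N p (C p) x t = M) :
    (∀ x : EuclideanSpace ℝ (Fin N), x ≠ 0 →
      Tendsto (fun p => pleBarenblatt N p (C p) x t) (𝓝[>] pc) (𝓝 0)) ∧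
    (∀ f : EuclideanSpace ℝ (Fin N) → ℝ, Continuous f → (∃ K, ∀ x, |f x| ≤ K) →
      Tendsto (fun p => ∫ x, f x * pleBarenblatt N p (C p) x t)
        (𝓝[>] pc) (𝓝 (M * f 0))) := by
  obtain rfl : pc = pleCritical N := hpc
  have hN0 : N ≠ 0 := by omega
  have hrange : ∀ᶠ p in 𝓝[>] pleCritical N,
      1 < p ∧ p < 2 ∧ 0 < pleLambda N p ∧ 0 < C p ∧ ∫ x, pleBarenblatt N p (C p) x t = M := by
    filter_upwards [eventually_nhdsGT_pleCritical hN0] with p ⟨hp1, hp2, hlam⟩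
    have hp := pleLambda_pos_iff.mp hlam
    exact ⟨hp1, hp2, hlam, hCpos p hp hp2, hmass p hp hp2⟩
  have hB_nonneg : ∀ᶠ p in 𝓝[>] pleCritical N, 0 ≤ fun x => pleBarenblatt N p (C p) x t := by
    filter_upwards [hrange] with p ⟨hp1, hp2, hlam, hC, _⟩
    exact pleBarenblatt_nonneg (pleK_pos hlam (by linarith) hp2).le hC.le ht.le
  refine ⟨fun x hx => ?_, fun f hf ⟨K, hK⟩ => ?_⟩
  · refine squeeze_zero' (hB_nonneg.mono fun p hp => hp x) ?_
      (tendsto_pleBarenblatt_zero_nhdsGT_pleCritical hN0 ht hx)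
    filter_upwards [hrange] with p ⟨hp1, hp2, hlam, hC, _⟩
    exact pleBarenblatt_le_pleBarenblatt_zero hp1 hp2 hlam hC.le ht hx
  refine tendsto_integral_mul_of_tendsto_setIntegral_compl_ball hB_nonneg ?_
    (hrange.mono fun p hp => hp.2.2.2.2) (fun δ hδ => ?_) hf.continuousAt hf.aestronglyMeasurable hK
  · filter_upwards [hrange] with p ⟨_, _, _, _, hmass⟩
    exact Integrable.of_integral_ne_zero (hmass ▸ hM.ne')
  refine squeeze_zero' ?_ ?_ (tendsto_setIntegral_compl_ball_pleBarenblatt_zero hN ht hδ)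
  · filter_upwards [hB_nonneg] with p hp
    exact setIntegral_nonneg measurableSet_ball.compl fun x _ => hp x
  filter_upwards [hrange] with p ⟨hp1, hp2, hlam, hC, _⟩
  exact setIntegral_compl_ball_pleBarenblatt_le hN0 hp1 hp2 hlam hC.le ht hδ
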